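/- If E_P[h·(v − u*)] ≥ 0 for every 𝒢-measurable v : Ω → U with E_P[|v|²] < ∞, then for every fixed u ∈ U one has h(ω)·(u − u*(ω)) ≥ 0 for P-almost every ω. -/

import Mathlib

/-! The test function `v = u` on `s ∈ 𝒢` and `v = u*` off `s` turns the integral inequality into
`0 ≤ ∫_s h·(u − u*)` for every `s ∈ 𝒢`; since `h·(u − u*)` is `𝒢`-measurable, this forces it to be
almost surely nonnegative. -/

open MeasureTheory
open scoped RealInnerProductSpace

noncomputable section

/-- `ℝ^m` with the Euclidean norm. -/
abbrev Vec (m : ℕ) : Type := EuclideanSpace ℝ (Fin m)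

section

variable {α E : Type*} {m m0 : MeasurableSpace α} {μ : Measure α}

theorem ae_nonneg_of_forall_setIntegral_nonneg_of_stronglyMeasurable (hm : m ≤ m0) {f : α → ℝ}
    (hf : Integrable f μ) (hf_meas : StronglyMeasurable[m] f)
    (hf_nonneg : ∀ s, MeasurableSet[m] s → 0 ≤ ∫ x in s, f x ∂μ) : 0 ≤ᵐ[μ] f :=
  ae_le_of_ae_le_trim <| ae_nonneg_of_forall_setIntegral_nonneg (hf.trim hm hf_meas)
    fun s hs _ => (setIntegral_trim hm hf_meas hs).symm ▸ hf_nonneg s hs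

variable [NormedAddCommGroup E] [InnerProductSpace ℝ E]

theorem integrable_inner_of_integrable_norm_mul {h w : α → E}
    (hh : AEStronglyMeasurable h μ) (hw : AEStronglyMeasurable w μ)
    (hint : Integrable (fun x => ‖h x‖ * ‖w x‖) μ) : Integrable (fun x => ⟪h x, w x⟫) μ :=
  hint.mono' (hh.inner hw) (ae_of_all _ fun _ => norm_inner_le_norm _ _)

theorem inner_piecewise_sub_eq_indicator (s : Set α) [DecidablePred (· ∈ s)] (h f g : α → E) :
    (fun x => ⟪h x, s.piecewise f g x - g x⟫) = s.indicator (fun x => ⟪h x, f x - g x⟫) := by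
  funext x
  by_cases hx : x ∈ s <;> simp [hx]

end

theorem pointwise_variational_inequality_general
    {Ω : Type} [mΩ : MeasurableSpace Ω] (P : Measure Ω) [IsProbabilityMeasure P]
    (𝒢 : MeasurableSpace Ω) (h𝒢 : 𝒢 ≤ mΩ)
    (m : ℕ) (U : Set (Vec m))
    -- `h` is `𝒢`-measurable with `E_P[|h||v|] < ∞` for every square-integrable `𝒢`-measurable `v`
    (h : Ω → Vec m) (hhmeas : Measurable[𝒢] h)
    (hhint : ∀ v : Ω → Vec m, Measurable[𝒢] v → Integrable (fun ω => ‖v ω‖ ^ 2) P →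
      Integrable (fun ω => ‖h ω‖ * ‖v ω‖) P)
    -- `u*` is `𝒢`-measurable, `U`-valued and square-integrable
    (ustar : Ω → Vec m) (hustarmeas : Measurable[𝒢] ustar) (hustarval : ∀ ω, ustar ω ∈ U)
    (hustarint : Integrable (fun ω => ‖ustar ω‖ ^ 2) P)
    -- the integral variational inequality
    (hvar : ∀ v : Ω → Vec m, Measurable[𝒢] v → (∀ ω, v ω ∈ U) →
      Integrable (fun ω => ‖v ω‖ ^ 2) P →
      0 ≤ ∫ ω, ⟪h ω, v ω - ustar ω⟫ ∂P) :
    ∀ u ∈ U, ∀ᵐ ω ∂P, 0 ≤ ⟪h ω, u - ustar ω⟫ := by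
  classical
  intro u hu
  have aesm {v : Ω → Vec m} (hv : Measurable[𝒢] v) : AEStronglyMeasurable[mΩ] v P :=
    (hv.stronglyMeasurable.mono h𝒢).aestronglyMeasurable
  have hustar : MemLp ustar 2 P := (memLp_two_iff_integrable_sq_norm (aesm hustarmeas)).2 hustarint
  have hw : Measurable[𝒢] fun ω => u - ustar ω := measurable_const.sub hustarmeas
  have hf_int : Integrable (fun ω => ⟪h ω, u - ustar ω⟫) P :=
    integrable_inner_of_integrable_norm_mul (aesm hhmeas) (aesm hw) <| hhint _ hw <|
      (memLp_two_iff_integrable_sq_norm (aesm hw)).1 ((memLp_const u).sub hustar)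
  refine ae_nonneg_of_forall_setIntegral_nonneg_of_stronglyMeasurable h𝒢 hf_int
    (hhmeas.inner hw).stronglyMeasurable fun s hs => ?_
  have hv : Measurable[𝒢] (s.piecewise (fun _ => u) ustar) :=
    measurable_const.piecewise hs hustarmeas
  have hv_mem : ∀ ω, s.piecewise (fun _ => u) ustar ω ∈ U := fun ω => by
    by_cases hω : ω ∈ s <;> simp [hω, hu, hustarval]
  have hv_sq : Integrable (fun ω => ‖s.piecewise (fun _ => u) ustar ω‖ ^ 2) P :=
    (memLp_two_iff_integrable_sq_norm (aesm hv)).1 <|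
      ((memLp_const u).restrict s).piecewise (h𝒢 s hs) (hustar.restrict _)
  simpa only [inner_piecewise_sub_eq_indicator, integral_indicator (h𝒢 s hs)]
    using hvar _ hv hv_mem hv_sq

/-- If `E_P[h·(v − u*)] ≥ 0` for every `𝒢`-measurable `v : Ω → U` with
`E_P[|v|²] < ∞`, then for every fixed `u ∈ U` one has `h(ω)·(u − u*(ω)) ≥ 0` for `P`-almost
every `ω`. -/
theorem pointwise_variational_inequality
    {Ω : Type} [mΩ : MeasurableSpace Ω] (P : Measure Ω) [IsProbabilityMeasure P]
    (𝒢 : MeasurableSpace Ω) (h𝒢 : 𝒢 ≤ mΩ)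
    (m : ℕ) (U : Set (Vec m)) (hUne : U.Nonempty) (hUconv : Convex ℝ U)
    -- `h` is `𝒢`-measurable with `E_P[|h||v|] < ∞` for every square-integrable `𝒢`-measurable `v`
    (h : Ω → Vec m) (hhmeas : Measurable[𝒢] h)
    (hhint : ∀ v : Ω → Vec m, Measurable[𝒢] v → Integrable (fun ω => ‖v ω‖ ^ 2) P →
      Integrable (fun ω => ‖h ω‖ * ‖v ω‖) P)
    -- `u*` is `𝒢`-measurable, `U`-valued and square-integrable
    (ustar : Ω → Vec m) (hustarmeas : Measurable[𝒢] ustar) (hustarval : ∀ ω, ustar ω ∈ U)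
    (hustarint : Integrable (fun ω => ‖ustar ω‖ ^ 2) P)
    -- the integral variational inequality
    (hvar : ∀ v : Ω → Vec m, Measurable[𝒢] v → (∀ ω, v ω ∈ U) →
      Integrable (fun ω => ‖v ω‖ ^ 2) P →
      0 ≤ ∫ ω, ⟪h ω, v ω - ustar ω⟫ ∂P) :
    ∀ u ∈ U, ∀ᵐ ω ∂P, 0 ≤ ⟪h ω, u - ustar ω⟫ :=
  pointwise_variational_inequality_general (mΩ := mΩ) P 𝒢 h𝒢 m U h hhmeas hhint ustar hustarmeas
    hustarval hustarint hvar

end
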